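/- Let x : ℝ → ℝ be smooth and suppose the curve (x(y), y) satisfies ⟨[[0,1],[0,0]]·(x(y),y), N⟩ = k^{1/3}, where N = (1+x'²)^{-1/2}(-1, x') and k = -x''/(1+x'²)^{3/2}. Then x'' = y³, and hence x(y) = y⁵/20 + C₁y + C₂ for constants C₁, C₂. -/

import Mathlib

/-- The real cube root. -/
noncomputable def realCbrt (x : ℝ) : ℝ := Real.sign x * |x| ^ ((1 : ℝ) / 3)

lemma realCbrt_cube (a : ℝ) : realCbrt a ^ 3 = a := by
  unfold realCbrt
  rcases lt_trichotomy a 0 with h | h | h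
  · rw [Real.sign_of_neg h, abs_of_neg h, mul_pow,
      ← Real.rpow_natCast ((-a) ^ ((1 : ℝ)/3)) 3, ← Real.rpow_mul (by linarith)]
    norm_num
  · simp [h]
  · rw [Real.sign_of_pos h, abs_of_pos h, mul_pow,
      ← Real.rpow_natCast (a ^ ((1 : ℝ)/3)) 3, ← Real.rpow_mul (by linarith)]
    norm_num

/-- Skew steady case: a graph solution `(x(y), y)` of
`⟨[[0,1],[0,0]]·(x,y), N⟩ = k^{1/3}` satisfies `x'' = y³`, hence
`x = y⁵/20 + C₁ y + C₂`. -/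
theorem skew_steady (x : ℝ → ℝ) (hx : ContDiff ℝ (⊤ : ℕ∞) x)
    (heq : ∀ y : ℝ,
      (-y) * (1 + (deriv x y) ^ 2) ^ (-(1 : ℝ) / 2) =
        realCbrt (-(deriv (deriv x) y) / (1 + (deriv x y) ^ 2) ^ ((3 : ℝ) / 2))) :
    (∀ y : ℝ, deriv (deriv x) y = y ^ 3) ∧
      ∃ C₁ C₂ : ℝ, ∀ y : ℝ, x y = y ^ 5 / 20 + C₁ * y + C₂ := by
  have key : ∀ y : ℝ, deriv (deriv x) y = y ^ 3 := by
    intro y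
    set d := deriv x y
    have hpos : (0 : ℝ) < 1 + d ^ 2 := by positivity
    have h3 := congrArg (fun t : ℝ => t ^ 3) (heq y)
    rw [realCbrt_cube] at h3
    have hL : ((1 + d ^ 2) ^ (-(1 : ℝ) / 2)) ^ 3 = ((1 + d ^ 2) ^ ((3 : ℝ) / 2))⁻¹ := by
      rw [← Real.rpow_natCast ((1 + d ^ 2) ^ (-(1:ℝ)/2)) 3, ← Real.rpow_mul hpos.le,
        ← Real.rpow_neg hpos.le]
      norm_num
    rw [mul_pow, hL] at h3
    have hne : (1 + d ^ 2) ^ ((3 : ℝ) / 2) ≠ 0 := (Real.rpow_pos_of_pos hpos _).ne'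
    field_simp at h3
    change -(y ^ 3 * (1 + d ^ 2) ^ ((3 : ℝ) / 2)) = _ at h3
    have h4 : (1 + d ^ 2) ^ ((3 : ℝ) / 2) * deriv (deriv x) y
        = (1 + d ^ 2) ^ ((3 : ℝ) / 2) * y ^ 3 := by linarith [h3]
    exact mul_left_cancel₀ hne h4
  refine ⟨key, ?_⟩
  have hdx : Differentiable ℝ x := hx.differentiable (by simp)
  have hx' : ContDiff ℝ (⊤ : ℕ∞) x := hx.of_le (by simp)
  have hdx' : Differentiable ℝ (deriv x) :=
    ((contDiff_infty_iff_deriv.mp hx').2).differentiable (by simp)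
  set C₁ := deriv x 0 with hC₁
  have h1 : ∀ y : ℝ, deriv x y = y ^ 4 / 4 + C₁ := by
    intro y
    have hconst : ∀ a b : ℝ, (fun y => deriv x y - (y ^ 4 / 4 + C₁)) a
        = (fun y => deriv x y - (y ^ 4 / 4 + C₁)) b := by
      apply is_const_of_deriv_eq_zero
      · exact hdx'.sub (by fun_prop)
      · intro t
        have : deriv (fun y => deriv x y - (y ^ 4 / 4 + C₁)) t
            = deriv (deriv x) t - (t ^ 3 + 0) := by
          rw [deriv_fun_sub (hdx' t) (by fun_prop), deriv_fun_add (by fun_prop) (by fun_prop)]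
          simp [deriv_div_const]
          try ring
        rw [this, key t]; ring
    have := hconst y 0
    simp at this
    linarith
  have h2 : ∀ a b : ℝ, (fun y => x y - (y ^ 5 / 20 + C₁ * y)) a
      = (fun y => x y - (y ^ 5 / 20 + C₁ * y)) b := by
    apply is_const_of_deriv_eq_zero
    · exact hdx.sub (by fun_prop)
    · intro t
      have : deriv (fun y => x y - (y ^ 5 / 20 + C₁ * y)) t
          = deriv x t - (t ^ 4 / 4 + C₁) := by
        rw [deriv_fun_sub (hdx t) (by fun_prop), deriv_fun_add (by fun_prop) (by fun_prop)]
        have hm : deriv (HMul.hMul C₁) t = C₁ := by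
          simpa using deriv_const_mul_field (v := fun y : ℝ => y) (x := t) C₁
        rw [hm]
        simp [deriv_div_const]
        try ring
      rw [this, h1 t]; ring
  refine ⟨C₁, x 0, fun y => ?_⟩
  have := h2 y 0
  simp at this
  linarith
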